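/- arXiv:1809.00081 — 3 statements merged into one kernel-verified Lean document; each statement's English description precedes it below -/
import Mathlib

section
/- In the p-compactification X of M, the space X with the topology generated by the base B(X) is compact. -/
open TopologicalSpace Set

def pcA {M N : Type*} (p : M → N) (Mout : Set M) (E : Set N) (K : Set M) : Set (M ⊕ N) :=
  Sum.inl '' (Mout ∩ p ⁻¹' E ∩ Kᶜ) ∪ Sum.inr '' E

def pcBase {M N : Type*} [TopologicalSpace M] [TopologicalSpace N]
    (p : M → N) (Mout : Set M) : Set (Set (M ⊕ N)) :=
  {s | ∃ O : Set M, IsOpen O ∧ s = Sum.inl '' O} ∪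
    {s | ∃ (E : Set N) (K : Set M), IsOpen E ∧ IsCompact K ∧ s = pcA p Mout E K}

lemma mem_pcA_inl {M N : Type*} (p : M → N) (Mout : Set M) (E : Set N) (K : Set M) (m : M) :
    Sum.inl m ∈ pcA p Mout E K ↔ m ∈ Mout ∩ p ⁻¹' E ∩ Kᶜ := by
  simp [pcA]

lemma mem_pcA_inr {M N : Type*} (p : M → N) (Mout : Set M) (E : Set N) (K : Set M) (n : N) :
    Sum.inr n ∈ pcA p Mout E K ↔ n ∈ E := by
  simp [pcA]

lemma pcA_inter {M N : Type*} (p : M → N) (Mout : Set M) (E E' : Set N) (K K' : Set M) :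
    pcA p Mout E K ∩ pcA p Mout E' K' = pcA p Mout (E ∩ E') (K ∪ K') := by
  ext x
  cases x with
  | inl m => simp [mem_pcA_inl, mem_inter_iff]; tauto
  | inr n => simp [mem_pcA_inr, mem_inter_iff]

lemma inl_image_inter_pcA {M N : Type*} (p : M → N) (Mout : Set M) (O : Set M)
    (E : Set N) (K : Set M) :
    Sum.inl '' O ∩ pcA p Mout E K = Sum.inl '' (O ∩ (Mout ∩ p ⁻¹' E ∩ Kᶜ)) := by
  ext x
  cases x with
  | inl m => simp [mem_pcA_inl, mem_inter_iff]
  | inr n => simp [pcA]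

lemma pcOpen_trace {M N : Type*} [TopologicalSpace M] [TopologicalSpace N] [T2Space M]
    (Min : Set M) (hMin : IsCompact Min) (p : M → N) (hp : ContinuousOn p Minᶜ)
    {b : Set (M ⊕ N)} (hb : b ∈ pcBase p Minᶜ) : IsOpen (Sum.inl ⁻¹' b) := by
  rcases hb with ⟨O, hO, rfl⟩ | ⟨E, K, hE, hK, rfl⟩
  · rwa [preimage_image_eq _ Sum.inl_injective]
  · have : Sum.inl ⁻¹' pcA p Minᶜ E K = (Minᶜ ∩ p ⁻¹' E) ∩ Kᶜ := by
      ext m; simp [mem_pcA_inl, inter_assoc]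
    rw [this]
    exact (hp.isOpen_inter_preimage hMin.isClosed.isOpen_compl hE).inter
      hK.isClosed.isOpen_compl

theorem pcBase_isBasis {M N : Type*} [TopologicalSpace M] [TopologicalSpace N]
    [T2Space M] (Min : Set M) (hMin : IsCompact Min)
    (p : M → N) (hp : ContinuousOn p Minᶜ) :
    @IsTopologicalBasis (M ⊕ N) (generateFrom (pcBase p Minᶜ)) (pcBase p Minᶜ) := by
  letI T : TopologicalSpace (M ⊕ N) := generateFrom (pcBase p Minᶜ)
  refine ⟨?_, ?_, rfl⟩
  · rintro t₁ h₁ t₂ h₂ x hx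
    have key : t₁ ∩ t₂ ∈ pcBase p Minᶜ := by
      rcases h₁ with ⟨O, hO, rfl⟩ | ⟨E, K, hE, hK, rfl⟩ <;>
        rcases h₂ with ⟨O', hO', rfl⟩ | ⟨E', K', hE', hK', rfl⟩
      · exact Or.inl ⟨O ∩ O', hO.inter hO', (image_inter Sum.inl_injective).symm⟩
      · refine Or.inl ⟨O ∩ (Minᶜ ∩ p ⁻¹' E' ∩ K'ᶜ), ?_, (inl_image_inter_pcA ..)⟩
        exact hO.inter ((hp.isOpen_inter_preimage hMin.isClosed.isOpen_compl hE').inter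
            hK'.isClosed.isOpen_compl)
      · refine Or.inl ⟨O' ∩ (Minᶜ ∩ p ⁻¹' E ∩ Kᶜ), ?_, ?_⟩
        · exact hO'.inter ((hp.isOpen_inter_preimage hMin.isClosed.isOpen_compl hE).inter
              hK.isClosed.isOpen_compl)
        · rw [inter_comm]; exact inl_image_inter_pcA ..
      · exact Or.inr ⟨E ∩ E', K ∪ K', hE.inter hE', hK.union hK', (pcA_inter ..)⟩
    exact ⟨t₁ ∩ t₂, key, hx, subset_rfl⟩
  · apply eq_univ_of_forall
    rintro (m | n)
    · exact ⟨Sum.inl '' univ, Or.inl ⟨univ, isOpen_univ, rfl⟩, ⟨m, trivial, rfl⟩⟩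
    · exact ⟨pcA p Minᶜ univ ∅, Or.inr ⟨univ, ∅, isOpen_univ, isCompact_empty, rfl⟩,
        (mem_pcA_inr ..).2 trivial⟩

/-- **Lemma 4.3.** The `p`-compactification `X = M ⊔ N`, endowed with the topology
generated by the base `B(X) = T(M) ∪ {A_{E,K}}`, is a compact space. -/
theorem stmt6 {M N : Type*} [TopologicalSpace M] [TopologicalSpace N]
    [T2Space M] [LocallyCompactSpace M] [SecondCountableTopology M]
    [T2Space N] [CompactSpace N] [SecondCountableTopology N]
    (Min : Set M) (hMin : IsCompact Min)
    (p : M → N) (hp : ContinuousOn p Minᶜ)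
    (hsurj : ∀ n : N, ∃ m ∈ Minᶜ, p m = n)
    (hfib : ∀ n : N, ¬ IsCompact {m | m ∈ Minᶜ ∧ p m = n}) :
    @CompactSpace (M ⊕ N) (generateFrom (pcBase p Minᶜ)) := by
  classical
  letI T : TopologicalSpace (M ⊕ N) := generateFrom (pcBase p Minᶜ)
  have hB := pcBase_isBasis Min hMin p hp
  refine ⟨?_⟩
  refine isCompact_of_finite_subcover fun {ι} U hU hcov => ?_
  -- choose, for every point, a basic set inside some cover element
  have hchoice : ∀ x : M ⊕ N, ∃ (j : ι) (b : Set (M ⊕ N)),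
      b ∈ pcBase p Minᶜ ∧ x ∈ b ∧ b ⊆ U j := by
    intro x
    rcases mem_iUnion.1 (hcov (mem_univ x)) with ⟨j, hj⟩
    rcases hB.exists_subset_of_mem_open hj (hU j) with ⟨b, hb, hxb, hbU⟩
    exact ⟨j, b, hb, hxb, hbU⟩
  choose j b hb hxb hbU using hchoice
  -- for points of N, the basic set must be of the second kind
  have hN : ∀ n : N, ∃ (E : Set N) (K : Set M),
      IsOpen E ∧ IsCompact K ∧ n ∈ E ∧ pcA p Minᶜ E K ⊆ U (j (Sum.inr n)) := by
    intro n
    rcases hb (Sum.inr n) with ⟨O, hO, hbeq⟩ | ⟨E, K, hE, hK, hbeq⟩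
    · exfalso
      have := hxb (Sum.inr n); rw [hbeq] at this
      simp at this
    · refine ⟨E, K, hE, hK, ?_, ?_⟩
      · have := hxb (Sum.inr n); rw [hbeq] at this
        exact (mem_pcA_inr ..).1 this
      · rw [← hbeq]; exact hbU _
  choose E K hEopen hKcpt hnE hEK using hN
  -- finitely many E's cover N
  obtain ⟨s, hs⟩ := isCompact_univ.elim_finite_subcover E hEopen
    (fun n _ => mem_iUnion.2 ⟨n, hnE n⟩)
  -- the compact leftover part of M
  set K₀ : Set M := Min ∪ ⋃ n ∈ s, K n with hK₀def
  have hK₀ : IsCompact K₀ := hMin.union (s.isCompact_biUnion fun n _ => hKcpt n)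
  -- traces of basic sets on M are open, cover K₀
  have htr : ∀ m : M, IsOpen (Sum.inl ⁻¹' b (Sum.inl m)) :=
    fun m => pcOpen_trace Min hMin p hp (hb (Sum.inl m))
  obtain ⟨t, ht⟩ := hK₀.elim_finite_subcover (fun m : M => Sum.inl ⁻¹' b (Sum.inl m)) htr
    (fun m _ => mem_iUnion.2 ⟨m, hxb (Sum.inl m)⟩)
  refine ⟨s.image (fun n => j (Sum.inr n)) ∪ t.image (fun m => j (Sum.inl m)), ?_⟩
  rintro (m | n) -
  · by_cases hm : m ∈ K₀
    · rcases mem_iUnion₂.1 (ht hm) with ⟨m', hm', hmem⟩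
      refine mem_iUnion₂.2 ⟨j (Sum.inl m'), ?_, hbU (Sum.inl m') hmem⟩
      exact Finset.mem_union_right _ (Finset.mem_image_of_mem _ hm')
    · have hmMin : m ∈ Minᶜ := fun h => hm (Or.inl h)
      rcases mem_iUnion₂.1 (hs (mem_univ (p m))) with ⟨n, hn, hpn⟩
      have hmK : m ∉ K n := fun h => hm (Or.inr (mem_biUnion hn h))
      refine mem_iUnion₂.2 ⟨j (Sum.inr n), ?_, hEK n ?_⟩
      · exact Finset.mem_union_left _ (Finset.mem_image_of_mem _ hn)
      · exact (mem_pcA_inl ..).2 ⟨⟨hmMin, hpn⟩, hmK⟩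
  · rcases mem_iUnion₂.1 (hs (mem_univ n)) with ⟨n', hn', hnE'⟩
    refine mem_iUnion₂.2 ⟨j (Sum.inr n'), ?_, hEK n' ((mem_pcA_inr ..).2 hnE')⟩
    exact Finset.mem_union_left _ (Finset.mem_image_of_mem _ hn')
end

section
/- A function φ : X → ℂ on the p-compactification X = M ⊔ N is continuous if and only if (a) φ|_M and φ|_N are continuous, and (b) for every n ∈ N and ε > 0 there exist an open neighborhood E of n in N and a compact K ⊆ M such that |φ(m) − φ(n)| ≤ ε for all m ∈ M^out with p(m) ∈ E and m ∉ K. -/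
open TopologicalSpace Set

/-! Neighbourhoods of a point `n` at infinity are generated by the sets `pcA p Mout E K`, which
are closed under finite intersections (intersect the `E`'s, unite the `K`'s). Hence continuity of
`φ` at `n` splits into continuity of `φ|_N` at `n` and condition (b) on `M^out`; at points of `M`,
which is embedded as an open subspace, continuity of `φ` is continuity of `φ|_M`. -/

namespace PCompactification

open Topology

variable {M N : Type*} {p : M → N} {Mout : Set M} {E E' : Set N} {K K' : Set M}

@[simp]
lemma inl_mem_pcA {m : M} : Sum.inl m ∈ pcA p Mout E K ↔ m ∈ Mout ∧ p m ∈ E ∧ m ∉ K := by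
  simp [pcA, and_assoc]

@[simp]
lemma inr_mem_pcA {n : N} : Sum.inr n ∈ pcA p Mout E K ↔ n ∈ E := by
  simp [pcA]

lemma pcA_inter_union_subset :
    pcA p Mout (E ∩ E') (K ∪ K') ⊆ pcA p Mout E K ∩ pcA p Mout E' K' := by
  rintro (m | n) hx <;> simp_all

variable [TopologicalSpace M] [TopologicalSpace N]

lemma exists_pcA_subset_of_generateOpen {U : Set (M ⊕ N)}
    (hU : GenerateOpen (pcBase p Mout) U) {n : N} (hn : Sum.inr n ∈ U) :
    ∃ (E : Set N) (K : Set M), IsOpen E ∧ n ∈ E ∧ IsCompact K ∧ pcA p Mout E K ⊆ U := by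
  induction hU with
  | basic s hs =>
    rcases hs with ⟨O, -, rfl⟩ | ⟨E, K, hE, hK, rfl⟩
    · simp at hn
    · exact ⟨E, K, hE, inr_mem_pcA.mp hn, hK, subset_rfl⟩
  | univ => exact ⟨univ, ∅, isOpen_univ, mem_univ n, isCompact_empty, subset_univ _⟩
  | inter u v _ _ ihu ihv =>
    obtain ⟨E, K, hE, hnE, hK, hEK⟩ := ihu hn.1
    obtain ⟨E', K', hE', hnE', hK', hEK'⟩ := ihv hn.2
    exact ⟨E ∩ E', K ∪ K', hE.inter hE', ⟨hnE, hnE'⟩, hK.union hK',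
      pcA_inter_union_subset.trans (inter_subset_inter hEK hEK')⟩
  | sUnion S _ ih =>
    obtain ⟨t, htS, hnt⟩ := hn
    obtain ⟨E, K, hE, hnE, hK, hEK⟩ := ih t htS hnt
    exact ⟨E, K, hE, hnE, hK, hEK.trans (subset_sUnion_of_mem htS)⟩

lemma hasBasis_nhds_inr (n : N) :
    (@nhds _ (generateFrom (pcBase p Mout)) (Sum.inr n)).HasBasis
      (fun EK : Set N × Set M => IsOpen EK.1 ∧ n ∈ EK.1 ∧ IsCompact EK.2)
      (fun EK => pcA p Mout EK.1 EK.2) := by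
  let := generateFrom (pcBase p Mout)
  refine ⟨fun U => ⟨fun hU => ?_, ?_⟩⟩
  · obtain ⟨V, hVU, hV, hnV⟩ := mem_nhds_iff.mp hU
    obtain ⟨E, K, hE, hnE, hK, hEK⟩ := exists_pcA_subset_of_generateOpen hV hnV
    exact ⟨(E, K), ⟨hE, hnE, hK⟩, hEK.trans hVU⟩
  · rintro ⟨⟨E, K⟩, ⟨hE, hnE, hK⟩, hEK⟩
    refine Filter.mem_of_superset (IsOpen.mem_nhds ?_ (inr_mem_pcA.mpr hnE)) hEK
    exact isOpen_generateFrom_of_mem (Or.inr ⟨E, K, hE, hK, rfl⟩)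

lemma continuous_inr : @Continuous _ _ _ (generateFrom (pcBase p Mout)) (Sum.inr : N → M ⊕ N) := by
  rw [continuous_generateFrom_iff]
  rintro s (⟨O, -, rfl⟩ | ⟨E, K, hE, -, rfl⟩)
  · simp
  · simpa [preimage]

lemma continuous_inl [T2Space M] (hMout : IsOpen Mout) (hp : ContinuousOn p Mout) :
    @Continuous _ _ _ (generateFrom (pcBase p Mout)) (Sum.inl : M → M ⊕ N) := by
  rw [continuous_generateFrom_iff]
  rintro s (⟨O, hO, rfl⟩ | ⟨E, K, hE, hK, rfl⟩)
  · rwa [Sum.inl_injective.preimage_image]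
  · have hpre : Sum.inl ⁻¹' pcA p Mout E K = Mout ∩ p ⁻¹' E ∩ Kᶜ := by
      ext m; simp [and_assoc]
    rw [hpre]
    exact (hp.isOpen_inter_preimage hMout hE).inter hK.isClosed.isOpen_compl

lemma isOpenEmbedding_inl [T2Space M] (hMout : IsOpen Mout) (hp : ContinuousOn p Mout) :
    @IsOpenEmbedding _ _ _ (generateFrom (pcBase p Mout)) (Sum.inl : M → M ⊕ N) :=
  let := generateFrom (pcBase p Mout)
  .of_continuous_injective_isOpenMap (continuous_inl hMout hp) Sum.inl_injective
    fun O hO => isOpen_generateFrom_of_mem (Or.inl ⟨O, hO, rfl⟩)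

lemma continuousAt_inr_iff {α : Type*} [SeminormedAddCommGroup α] (φ : M ⊕ N → α) (n : N) :
    @ContinuousAt _ _ (generateFrom (pcBase p Mout)) _ φ (Sum.inr n) ↔
      ContinuousAt (fun n' => φ (Sum.inr n')) n ∧
        ∀ ε > (0 : ℝ), ∃ (E : Set N) (K : Set M), IsOpen E ∧ n ∈ E ∧ IsCompact K ∧
          ∀ m ∈ Mout, p m ∈ E → m ∉ K → ‖φ (Sum.inl m) - φ (Sum.inr n)‖ ≤ ε := by
  let := generateFrom (pcBase p Mout)
  have hball : ContinuousAt φ (Sum.inr n) ↔ ∀ ε > 0, ∃ E K, (IsOpen E ∧ n ∈ E ∧ IsCompact K) ∧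
      ∀ x ∈ pcA p Mout E K, ‖φ x - φ (Sum.inr n)‖ < ε := by
    rw [ContinuousAt, (hasBasis_nhds_inr n).tendsto_iff Metric.nhds_basis_ball]
    simp only [Prod.exists, Metric.mem_ball, dist_eq_norm]
  constructor
  · intro hφ
    refine ⟨hφ.comp continuous_inr.continuousAt, fun ε hε => ?_⟩
    obtain ⟨E, K, ⟨hE, hnE, hK⟩, hEK⟩ := hball.mp hφ ε hε
    exact ⟨E, K, hE, hnE, hK, fun m hm hpm hmK => (hEK _ (inl_mem_pcA.mpr ⟨hm, hpm, hmK⟩)).le⟩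
  · rintro ⟨hφN, hφM⟩
    refine hball.mpr fun ε hε => ?_
    obtain ⟨E, K, hE, hnE, hK, hEK⟩ := hφM (ε / 2) (half_pos hε)
    obtain ⟨E', hE'φ, hE', hnE'⟩ :=
      mem_nhds_iff.mp (hφN.preimage_mem_nhds (Metric.ball_mem_nhds _ hε))
    refine ⟨E ∩ E', K, ⟨hE.inter hE', ⟨hnE, hnE'⟩, hK⟩, ?_⟩
    rintro (m | n') hx
    · obtain ⟨hm, ⟨hpm, -⟩, hmK⟩ := inl_mem_pcA.mp hx
      exact (hEK m hm hpm hmK).trans_lt (half_lt_self hε)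
    · simpa [dist_eq_norm] using hE'φ (inr_mem_pcA.mp hx).2

end PCompactification

open PCompactification in
theorem stmt8_general {M N : Type*} [TopologicalSpace M] [TopologicalSpace N]
    [T2Space M]
    (Min : Set M) (hMin : IsCompact Min)
    (p : M → N) (hp : ContinuousOn p Minᶜ)
    (φ : M ⊕ N → ℂ) :
    @Continuous (M ⊕ N) ℂ (generateFrom (pcBase p Minᶜ)) _ φ ↔
      (Continuous (fun m : M => φ (Sum.inl m)) ∧
        Continuous (fun n : N => φ (Sum.inr n)) ∧
        ∀ n : N, ∀ ε > (0 : ℝ), ∃ (E : Set N) (K : Set M),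
          IsOpen E ∧ n ∈ E ∧ IsCompact K ∧
          ∀ m ∈ Minᶜ, p m ∈ E → m ∉ K →
            ‖φ (Sum.inl m) - φ (Sum.inr n)‖ ≤ ε) := by
  let := generateFrom (pcBase p Minᶜ)
  have hinl := isOpenEmbedding_inl (N := N) hMin.isClosed.isOpen_compl hp
  simp only [continuous_iff_continuousAt, Sum.forall, continuousAt_inr_iff, forall_and,
    ← hinl.continuousAt_iff, Function.comp_def]

/-- **Remark 4.4.** A function `φ : X → ℂ` on the `p`-compactification `X = M ⊔ N` is
continuous iff (a) its restrictions to `M` and to `N` are continuous, and (b) for every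
`n ∈ N` and `ε > 0` there are an open neighborhood `E` of `n` in `N` and a compact
`K ⊆ M` such that `|φ(m) − φ(n)| ≤ ε` whenever `m ∈ M^out`, `p(m) ∈ E` and `m ∉ K`. -/
theorem stmt8 {M N : Type*} [TopologicalSpace M] [TopologicalSpace N]
    [T2Space M] [LocallyCompactSpace M] [SecondCountableTopology M]
    [T2Space N] [CompactSpace N] [SecondCountableTopology N]
    (Min : Set M) (hMin : IsCompact Min)
    (p : M → N) (hp : ContinuousOn p Minᶜ)
    (hsurj : ∀ n : N, ∃ m ∈ Minᶜ, p m = n)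
    (hfib : ∀ n : N, ¬ IsCompact {m | m ∈ Minᶜ ∧ p m = n})
    (φ : M ⊕ N → ℂ) :
    @Continuous (M ⊕ N) ℂ (generateFrom (pcBase p Minᶜ)) _ φ ↔
      (Continuous (fun m : M => φ (Sum.inl m)) ∧
        Continuous (fun n : N => φ (Sum.inr n)) ∧
        ∀ n : N, ∀ ε > (0 : ℝ), ∃ (E : Set N) (K : Set M),
          IsOpen E ∧ n ∈ E ∧ IsCompact K ∧
          ∀ m ∈ Minᶜ, p m ∈ E → m ∉ K →
            ‖φ (Sum.inl m) - φ (Sum.inr n)‖ ≤ ε) :=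
  stmt8_general Min hMin p hp φ
end

section
/- Let φ : M → ℂ be a bounded continuous function on M = M^in ⊔ M^out that is eventually constant along fibers: there exists a compact K ⊇ M^in such that φ(m) = φ(m') whenever m, m' ∉ K and p(m) = p(m'). If moreover the induced function on N is continuous, then φ extends to a continuous function on the p-compactification X = M ⊔ N. -/
open TopologicalSpace Set Topology

/-! The preimage of an open set under the extension is the union of an open set of `M` and
the basic neighbourhood of infinity `A_{E,K}` with `E = φ̄⁻¹ V`; both are basic open sets. -/

section PCompactification

variable {M N Y : Type*} {p : M → N} {Mout : Set M}

theorem preimage_sumElim_eq_union_pcA {φ : M → Y} {φbar : N → Y} {K : Set M}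
    (hφbar : ∀ m ∈ Mout, m ∉ K → φbar (p m) = φ m) (V : Set Y) :
    Sum.elim φ φbar ⁻¹' V = Sum.inl '' (φ ⁻¹' V) ∪ pcA p Mout (φbar ⁻¹' V) K := by
  ext (m | n)
  · simp only [pcA, mem_preimage, Sum.elim_inl, mem_union, mem_image, Sum.inl.injEq,
      exists_eq_right, reduceCtorEq, and_false, exists_false, or_false]
    constructor
    · exact Or.inl
    · rintro (h | ⟨⟨hm, hE⟩, hK⟩)
      · exact h
      · exact hφbar m hm hK ▸ hE
  · simp [pcA]

variable [TopologicalSpace M] [TopologicalSpace N]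

theorem isOpen_inl_image_pcBase {O : Set M} (hO : IsOpen O) :
    IsOpen[generateFrom (pcBase p Mout)] (Sum.inl '' O) :=
  isOpen_generateFrom_of_mem (Or.inl ⟨O, hO, rfl⟩)

theorem isOpen_pcA {E : Set N} {K : Set M} (hE : IsOpen E) (hK : IsCompact K) :
    IsOpen[generateFrom (pcBase p Mout)] (pcA p Mout E K) :=
  isOpen_generateFrom_of_mem (Or.inr ⟨E, K, hE, hK, rfl⟩)

theorem continuous_sumElim_pcBase [TopologicalSpace Y] {φ : M → Y} {φbar : N → Y} {K : Set M}
    (hφ : Continuous φ) (hφbar : Continuous φbar) (hK : IsCompact K)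
    (hφK : ∀ m ∈ Mout, m ∉ K → φbar (p m) = φ m) :
    Continuous[generateFrom (pcBase p Mout), _] (Sum.elim φ φbar) := by
  let _ := generateFrom (pcBase p Mout)
  refine continuous_def.2 fun V hV => ?_
  rw [preimage_sumElim_eq_union_pcA hφK]
  exact (isOpen_inl_image_pcBase (hV.preimage hφ)).union
    (isOpen_pcA (hV.preimage hφbar) hK)

end PCompactification

theorem stmt19_general {M N : Type*} [TopologicalSpace M] [TopologicalSpace N]
    (Min : Set M)
    (p : M → N)
    (φ : M → ℂ) (hφc : Continuous φ)
    (K : Set M) (hK : IsCompact K)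
    (φbar : N → ℂ) (hφbar : ∀ m, m ∈ Minᶜ → m ∉ K → φbar (p m) = φ m)
    (hφbarc : Continuous φbar) :
    @Continuous (M ⊕ N) ℂ (generateFrom (pcBase p Minᶜ)) _ (Sum.elim φ φbar) :=
  continuous_sumElim_pcBase hφc hφbarc hK hφbar

/-- Let `φ : M → ℂ` be a bounded continuous function which is eventually constant along
the fibers of `p`: there is a compact `K ⊇ M^in` such that `φ(m) = φ(m')` whenever
`m, m' ∉ K` and `p(m) = p(m')`, the common asymptotic value along the fiber over `n` being
`φ̄(n)`. If `φ̄ : N → ℂ` is continuous, then the function equal to `φ` on `M` and to `φ̄`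
on `N` is continuous on the `p`-compactification `X = M ⊔ N`. -/
theorem stmt19 {M N : Type*} [TopologicalSpace M] [TopologicalSpace N]
    [T2Space M] [LocallyCompactSpace M] [SecondCountableTopology M]
    [T2Space N] [CompactSpace N] [SecondCountableTopology N]
    (Min : Set M) (hMin : IsCompact Min)
    (p : M → N) (hp : ContinuousOn p Minᶜ)
    (hsurj : ∀ n : N, ∃ m ∈ Minᶜ, p m = n)
    (hfib : ∀ n : N, ¬ IsCompact {m | m ∈ Minᶜ ∧ p m = n})
    (φ : M → ℂ) (hφc : Continuous φ) (hφb : ∃ Cb : ℝ, ∀ m, ‖φ m‖ ≤ Cb)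
    (K : Set M) (hK : IsCompact K) (hMinK : Min ⊆ K)
    (hconst : ∀ m m', m ∉ K → m' ∉ K → m ∈ Minᶜ → m' ∈ Minᶜ → p m = p m' → φ m = φ m')
    (φbar : N → ℂ) (hφbar : ∀ m, m ∈ Minᶜ → m ∉ K → φbar (p m) = φ m)
    (hφbarc : Continuous φbar) :
    @Continuous (M ⊕ N) ℂ (generateFrom (pcBase p Minᶜ)) _ (Sum.elim φ φbar) :=
  stmt19_general Min p φ hφc K hK φbar hφbar hφbarc
end
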